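/- arXiv:2206.07358 — 2 statements merged into one kernel-verified Lean document; each statement's English description precedes it below -/
import Mathlib

section
/- Suppose G is contractible to C_4 via witness structure {W0,W1,W2,W3}, and d1, d2, d3 are three pairwise non-adjacent vertices of G each with neighborhood exactly {u,v}. Then u and v do not lie in opposite witness sets; that is, it is not the case that u ∈ Wi and v ∈ W_{(i+2) mod 4}. -/
/-! Each dₖ is adjacent to both u ∈ Wᵢ and v ∈ Wᵢ₊₂, so it lies in Wᵢ₊₁ or Wᵢ₋₁, and by
pigeonhole two of them share a witness set. But all neighbours of dₖ lie outside its own witness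
set, which is connected, so that set is the singleton {dₖ}. -/

def IsC4Witness {V : Type*} (G : SimpleGraph V) (W : ZMod 4 → Set V) : Prop :=
  (∀ v : V, ∃! i, v ∈ W i) ∧
  (∀ i, (W i).Nonempty) ∧
  (∀ i, (G.induce (W i)).Connected) ∧
  (∀ i j, i ≠ j →
    ((∃ u ∈ W i, ∃ v ∈ W j, G.Adj u v) ↔ (j = i + 1 ∨ j = i - 1)))

namespace SimpleGraph

variable {V : Type*} {G : SimpleGraph V}

theorem eq_of_induce_connected_of_disjoint_neighborSet {s : Set V} (hs : (G.induce s).Connected)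
    {a b : V} (ha : a ∈ s) (hb : b ∈ s) (hNa : Disjoint (G.neighborSet a) s) : b = a := by
  obtain ⟨p⟩ := hs.preconnected ⟨a, ha⟩ ⟨b, hb⟩
  cases p with
  | nil => rfl
  | cons hadj _ => exact absurd (Subtype.prop _) (hNa.notMem_of_mem_left hadj)

end SimpleGraph

namespace IsC4Witness

variable {V : Type*} {G : SimpleGraph V} {W : ZMod 4 → Set V}

theorem eq_of_mem (hW : IsC4Witness G W) {x : V} {i j : ZMod 4} (hi : x ∈ W i) (hj : x ∈ W j) :
    i = j :=
  (hW.1 x).unique hi hj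

theorem eq_add_one_or_sub_one_of_adj (hW : IsC4Witness G W) {x y : V} {i j : ZMod 4}
    (hx : x ∈ W i) (hy : y ∈ W j) (hxy : G.Adj x y) (hij : i ≠ j) : j = i + 1 ∨ j = i - 1 :=
  (hW.2.2.2 i j hij).mp ⟨x, hx, y, hy, hxy⟩

theorem eq_add_one_or_sub_one_of_neighborSet_eq (hW : IsC4Witness G W) {u v d : V}
    {i j : ZMod 4} (hu : u ∈ W i) (hv : v ∈ W (i + 2)) (hN : G.neighborSet d = {u, v})
    (hd : d ∈ W j) : j = i + 1 ∨ j = i - 1 := by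
  have hdu : G.Adj d u := show u ∈ G.neighborSet d by simp [hN]
  have hdv : G.Adj d v := show v ∈ G.neighborSet d by simp [hN]
  have key : ∀ a b : ZMod 4, (b ≠ a → a = b + 1 ∨ a = b - 1) →
      (b ≠ a + 2 → a + 2 = b + 1 ∨ a + 2 = b - 1) → b = a + 1 ∨ b = a - 1 := by decide
  exact key i j (hW.eq_add_one_or_sub_one_of_adj hd hu hdu)
    (hW.eq_add_one_or_sub_one_of_adj hd hv hdv)

theorem eq_of_mem_of_neighborSet_eq (hW : IsC4Witness G W) {u v a b : V} {i j : ZMod 4}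
    (hu : u ∈ W i) (hv : v ∈ W (i + 2)) (hNa : G.neighborSet a = {u, v}) (ha : a ∈ W j)
    (hb : b ∈ W j) : b = a := by
  have hj : j ≠ i ∧ j ≠ i + 2 := by
    have key : ∀ a b : ZMod 4, b = a + 1 ∨ b = a - 1 → b ≠ a ∧ b ≠ a + 2 := by decide
    exact key i j (hW.eq_add_one_or_sub_one_of_neighborSet_eq hu hv hNa ha)
  refine SimpleGraph.eq_of_induce_connected_of_disjoint_neighborSet (hW.2.2.1 j) ha hb ?_
  rw [hNa, Set.disjoint_left]
  rintro x (rfl | rfl) hx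
  exacts [hj.1 (hW.eq_of_mem hx hu), hj.2 (hW.eq_of_mem hx hv)]

end IsC4Witness

theorem c4_witness_three_common_neighbors_not_opposite_general {V : Type*}
    (G : SimpleGraph V) (W : ZMod 4 → Set V) (hW : IsC4Witness G W)
    (u v d₁ d₂ d₃ : V)
    (hd : d₁ ≠ d₂ ∧ d₁ ≠ d₃ ∧ d₂ ≠ d₃)
    (hN₁ : G.neighborSet d₁ = {u, v}) (hN₂ : G.neighborSet d₂ = {u, v})
    (hN₃ : G.neighborSet d₃ = {u, v}) :
    ¬ ∃ i : ZMod 4, u ∈ W i ∧ v ∈ W (i + 2) := by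
  rintro ⟨i, hu, hv⟩
  have index :
      ∀ d, G.neighborSet d = {u, v} → ∃ j, d ∈ W j ∧ (j = i + 1 ∨ j = i - 1) := by
    intro d hN
    obtain ⟨j, hj, -⟩ := hW.1 d
    exact ⟨j, hj, hW.eq_add_one_or_sub_one_of_neighborSet_eq hu hv hN hj⟩
  obtain ⟨j₁, hj₁, h₁⟩ := index d₁ hN₁
  obtain ⟨j₂, hj₂, h₂⟩ := index d₂ hN₂
  obtain ⟨j₃, hj₃, h₃⟩ := index d₃ hN₃
  have pigeonhole : j₁ = j₂ ∨ j₁ = j₃ ∨ j₂ = j₃ := by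
    rcases h₁ with rfl | rfl <;> rcases h₂ with rfl | rfl <;> rcases h₃ with rfl | rfl <;>
      simp
  rcases pigeonhole with rfl | rfl | rfl
  · exact hd.1 (hW.eq_of_mem_of_neighborSet_eq hu hv hN₂ hj₂ hj₁)
  · exact hd.2.1 (hW.eq_of_mem_of_neighborSet_eq hu hv hN₃ hj₃ hj₁)
  · exact hd.2.2 (hW.eq_of_mem_of_neighborSet_eq hu hv hN₃ hj₃ hj₂)

theorem c4_witness_three_common_neighbors_not_opposite {V : Type*}
    (G : SimpleGraph V) (W : ZMod 4 → Set V) (hW : IsC4Witness G W)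
    (u v d₁ d₂ d₃ : V)
    (hd : d₁ ≠ d₂ ∧ d₁ ≠ d₃ ∧ d₂ ≠ d₃)
    (hnadj : ¬ G.Adj d₁ d₂ ∧ ¬ G.Adj d₁ d₃ ∧ ¬ G.Adj d₂ d₃)
    (hN₁ : G.neighborSet d₁ = {u, v}) (hN₂ : G.neighborSet d₂ = {u, v})
    (hN₃ : G.neighborSet d₃ = {u, v}) :
    ¬ ∃ i : ZMod 4, u ∈ W i ∧ v ∈ W (i + 2) :=
  c4_witness_three_common_neighbors_not_opposite_general G W hW u v d₁ d₂ d₃ hd hN₁ hN₂ hN₃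
end

section
/- Let G be contractible to the 5-cycle via witness structure {W0,...,W4}, let uv be an edge of G such that u and v have a common neighbor in G. If the witness set containing a degree-2 vertex λ whose only neighbors are u and v were a singleton {λ}, then u and v lie in the two witness sets adjacent to {λ}, which are at distance 2 on the cycle; but since u,v have a common neighbor distinct from λ, u and v are joined by a path of length 2 avoiding λ, contradicting that nonconsecutive witness sets are non-adjacent. Hence: in any C_5-witness structure of G, a vertex λ with N(λ) = {u,v} where u and v have a common neighbor other than λ cannot form a singleton witness set. -/
def IsC5Witness {V : Type*} (G : SimpleGraph V) (W : ZMod 5 → Set V) : Prop :=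
  (∀ v : V, ∃! i, v ∈ W i) ∧
  (∀ i, (W i).Nonempty) ∧
  (∀ i, (G.induce (W i)).Connected) ∧
  (∀ i j, i ≠ j →
    ((∃ u ∈ W i, ∃ v ∈ W j, G.Adj u v) ↔ (j = i + 1 ∨ j = i - 1)))

/-! If `W i = {λ}`, the two witness sets next to `W i` can only be reached from `λ`, so each
of them contains `u` or `v`. A common neighbour `w` of `u` and `v` therefore lies in a witness set
within one step of both `W (i + 1)` and `W (i - 1)`; on the 5-cycle the only such set is `W i`,
forcing `w = λ`. -/

theorem ZMod.eq_of_near_add_one_of_near_sub_one {i k : ZMod 5}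
    (h₁ : k = i + 1 ∨ k = i + 1 + 1 ∨ k = i + 1 - 1)
    (h₂ : k = i - 1 ∨ k = i - 1 + 1 ∨ k = i - 1 - 1) : k = i := by
  revert i k
  decide

namespace IsC5Witness

variable {V : Type*} {G : SimpleGraph V} {W : ZMod 5 → Set V}

theorem eq_of_mem_of_mem (hW : IsC5Witness G W) {x : V} {i j : ZMod 5}
    (hi : x ∈ W i) (hj : x ∈ W j) : i = j :=
  (hW.1 x).unique hi hj

theorem near_of_adj (hW : IsC5Witness G W) {x y : V} {i j : ZMod 5}
    (hx : x ∈ W i) (hy : y ∈ W j) (hxy : G.Adj x y) :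
    j = i ∨ j = i + 1 ∨ j = i - 1 := by
  by_cases hij : i = j
  · exact Or.inl hij.symm
  · exact Or.inr ((hW.2.2.2 i j hij).mp ⟨x, hx, y, hy, hxy⟩)

theorem exists_adj_of_eq_singleton (hW : IsC5Witness G W) {x : V} {i j : ZMod 5}
    (hi : W i = {x}) (hj : j = i + 1 ∨ j = i - 1) : ∃ y ∈ W j, G.Adj x y := by
  have hij : i ≠ j :=
    (by decide : ∀ i j : ZMod 5, j = i + 1 ∨ j = i - 1 → i ≠ j) i j hj
  obtain ⟨x', hx', y, hy, hxy⟩ := (hW.2.2.2 i j hij).mpr hj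
  rw [hi, Set.mem_singleton_iff] at hx'
  exact ⟨y, hy, hx' ▸ hxy⟩

end IsC5Witness

theorem c5_witness_subdivision_vertex_not_singleton {V : Type*}
    (G : SimpleGraph V) (W : ZMod 5 → Set V) (hW : IsC5Witness G W)
    (lam u v : V) (hN : G.neighborSet lam = {u, v})
    (w : V) (hw : w ≠ lam) (hwu : G.Adj w u) (hwv : G.Adj w v) :
    ∀ i : ZMod 5, W i ≠ {lam} := by
  intro i hi
  have hw_adj : ∀ j, (j = i + 1 ∨ j = i - 1) → ∃ y ∈ W j, G.Adj y w := by
    intro j hj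
    obtain ⟨y, hy, hlamy⟩ := hW.exists_adj_of_eq_singleton hi hj
    have hy_uv : y ∈ ({u, v} : Set V) := hN ▸ hlamy
    rcases hy_uv with rfl | rfl
    exacts [⟨y, hy, hwu.symm⟩, ⟨y, hy, hwv.symm⟩]
  obtain ⟨k, hk, -⟩ := hW.1 w
  obtain ⟨y, hy, hyw⟩ := hw_adj (i + 1) (Or.inl rfl)
  obtain ⟨z, hz, hzw⟩ := hw_adj (i - 1) (Or.inr rfl)
  have hki : k = i := ZMod.eq_of_near_add_one_of_near_sub_one
    (hW.near_of_adj hy hk hyw) (hW.near_of_adj hz hk hzw)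
  rw [hki, hi, Set.mem_singleton_iff] at hk
  exact hw hk
end
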